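/- arXiv:1801.05377 — 3 statements merged into one kernel-verified Lean document; each statement's English description precedes it below -/
import Mathlib

section
/- The homogeneous cubic f = x₁²x₄ + x₁x₃² + x₂³ ∈ ℂ[x₁,x₂,x₃,x₄] has Waring rank over ℂ at most six; explicitly, f = (1/6)x₄³ + (1/6)(2x₁ + x₄)³ − (1/3)(x₁ + x₄)³ + x₂³ − (1/2)(x₁ + (i/√3)x₃)³ − (1/2)(x₁ − (i/√3)x₃)³. -/
/-- A tensor of format `n × n × n` is symmetric if its entries are unchanged under
every permutation of the three indices. -/
def IsSymTensor {K : Type*} [Field K] {n : ℕ} (T : Fin n → Fin n → Fin n → K) : Prop :=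
  ∀ (σ : Equiv.Perm (Fin 3)) (v : Fin 3 → Fin n),
    T (v (σ 0)) (v (σ 1)) (v (σ 2)) = T (v 0) (v 1) (v 2)

/-- The rank of an `n × n × n` tensor over `K`: the least `r` admitting a decomposition
into `r` rank-one terms. -/
noncomputable def tensorRank {K : Type*} [Field K] {n : ℕ}
    (T : Fin n → Fin n → Fin n → K) : ℕ :=
  sInf {r : ℕ | ∃ u v w : Fin r → Fin n → K,
    ∀ i j k, T i j k = ∑ s, u s i * v s j * w s k}

/-- The symmetric rank of an `n × n × n` tensor over `K`. -/
noncomputable def symTensorRank {K : Type*} [Field K] {n : ℕ}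
    (T : Fin n → Fin n → Fin n → K) : ℕ :=
  sInf {r : ℕ | ∃ (lam : Fin r → K) (u : Fin r → Fin n → K),
    ∀ i j k, T i j k = ∑ s, lam s * (u s i * u s j * u s k)}

open MvPolynomial in
/-- The Waring rank over `ℂ` of a polynomial in four variables: the least `r` such that
`f` is a linear combination of `r` cubes of linear forms. -/
noncomputable def waringRank (f : MvPolynomial (Fin 4) ℂ) : ℕ :=
  sInf {r : ℕ | ∃ (lam : Fin r → ℂ) (l : Fin r → Fin 4 → ℂ),
    f = ∑ s, C (lam s) * (∑ i, C (l s i) * X i) ^ 3}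

open MvPolynomial in
/-- The rank over `ℂ` of a cubic `f`: the tensor rank of the unique symmetric
`4 × 4 × 4` tensor `T` with `f = ∑ T i j k · xᵢ xⱼ xₖ`. -/
noncomputable def cubicRank (f : MvPolynomial (Fin 4) ℂ) : ℕ :=
  sInf {r : ℕ | ∃ T : Fin 4 → Fin 4 → Fin 4 → ℂ, IsSymTensor T ∧
    f = (∑ i, ∑ j, ∑ k, C (T i j k) * X i * X j * X k) ∧ tensorRank T ≤ r}

set_option maxHeartbeats 2000000 in
open MvPolynomial in
/-- The `E₆` cubic `x₁²x₄ + x₁x₃² + x₂³` equals the explicit sum of six cubes of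
linear forms, and hence has Waring rank at most six over `ℂ`. -/
theorem e6_cubic_waring_decomposition :
    (X 0 ^ 2 * X 3 + X 0 * X 2 ^ 2 + X 1 ^ 3 : MvPolynomial (Fin 4) ℂ) =
      C ((1 : ℂ)/6) * X 3 ^ 3 + C ((1 : ℂ)/6) * (2 * X 0 + X 3) ^ 3
        - C ((1 : ℂ)/3) * (X 0 + X 3) ^ 3 + X 1 ^ 3
        - C ((1 : ℂ)/2) * (X 0 + C (Complex.I / (Real.sqrt 3 : ℂ)) * X 2) ^ 3
        - C ((1 : ℂ)/2) * (X 0 - C (Complex.I / (Real.sqrt 3 : ℂ)) * X 2) ^ 3 ∧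
    waringRank (X 0 ^ 2 * X 3 + X 0 * X 2 ^ 2 + X 1 ^ 3 : MvPolynomial (Fin 4) ℂ) ≤ 6 := by
  have key : (X 0 ^ 2 * X 3 + X 0 * X 2 ^ 2 + X 1 ^ 3 : MvPolynomial (Fin 4) ℂ) =
      C ((1 : ℂ)/6) * X 3 ^ 3 + C ((1 : ℂ)/6) * (2 * X 0 + X 3) ^ 3
        - C ((1 : ℂ)/3) * (X 0 + X 3) ^ 3 + X 1 ^ 3
        - C ((1 : ℂ)/2) * (X 0 + C (Complex.I / (Real.sqrt 3 : ℂ)) * X 2) ^ 3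
        - C ((1 : ℂ)/2) * (X 0 - C (Complex.I / (Real.sqrt 3 : ℂ)) * X 2) ^ 3 := by
    have hc : ((Complex.I / (Real.sqrt 3 : ℂ)))^2 = -1/3 := by
      rw [div_pow, Complex.I_sq]
      norm_num
      rw [← Complex.ofReal_pow, Real.sq_sqrt (by norm_num : (3:ℝ) ≥ 0)]
      norm_num
    apply MvPolynomial.funext
    intro x
    simp only [map_add, map_sub, map_mul, map_pow, eval_X, eval_C, map_ofNat]
    linear_combination (3 * x 0 * x 2^2) * hc
  refine ⟨key, ?_⟩
  apply Nat.sInf_le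
  refine ⟨![1/6, 1/6, -(1/3), 1, -(1/2), -(1/2)],
    ![![0,0,0,1], ![2,0,0,1], ![1,0,0,1], ![0,1,0,0],
      ![1,0,Complex.I / (Real.sqrt 3 : ℂ),0], ![1,0,-(Complex.I / (Real.sqrt 3 : ℂ)),0]], ?_⟩
  rw [key]
  simp [Fin.sum_univ_succ, Matrix.cons_val_succ, map_ofNat,
    show (Fin.succ (2 : Fin 3)) = 3 from rfl]
  ring
end

section
/- Let r and n be positive integers with r ≤ n. Suppose that every symmetric r×r×r tensor over ℂ whose border rank is at most r has symmetric border rank at most r. Then every symmetric n×n×n tensor over ℂ whose border rank is at most r has symmetric border rank at most r. -/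
/-- The border rank over `ℂ`: the least `r` such that `T` lies in the closure of the set
of tensors of rank at most `r`. -/
noncomputable def borderRank {n : ℕ} (T : Fin n → Fin n → Fin n → ℂ) : ℕ :=
  sInf {r : ℕ | T ∈ closure {S : Fin n → Fin n → Fin n → ℂ | tensorRank S ≤ r}}

/-- The symmetric border rank over `ℂ`: the least `r` such that `T` lies in the closure
of the set of symmetric tensors of symmetric rank at most `r`. -/
noncomputable def symBorderRank {n : ℕ} (T : Fin n → Fin n → Fin n → ℂ) : ℕ :=
  sInf {r : ℕ | T ∈ closure
    {S : Fin n → Fin n → Fin n → ℂ | IsSymTensor S ∧ symTensorRank S ≤ r}}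

/-!
A symmetric tensor `T` of border rank at most `r` has a first flattening of rank at most `r`
(matrix rank is lower semicontinuous), so by symmetry all fibres of `T` lie in a subspace
`A ⊆ ℂⁿ` of dimension at most `r`. Choose `P : ℂⁿ → ℂʳ` and `Q : ℂʳ → ℂⁿ` with `Q ∘ P` the
identity on `A`. Then `S = (P ⊗ P ⊗ P) T` is a symmetric `r × r × r` tensor of border rank at
most `r`, hence of symmetric border rank at most `r`, and `T = (Q ⊗ Q ⊗ Q) S`. The continuous
linear map `Q ⊗ Q ⊗ Q` sends sums of `r` cubes to sums of `r` cubes, so `T` has symmetric border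
rank at most `r` as well.
-/

open Matrix

variable {K : Type*} [Field K] {n m : ℕ}

theorem Nat.sInf_setOf_le_iff {p : ℕ → Prop} (hp : Monotone p) (hex : ∃ m, p m) {r : ℕ} :
    sInf {m | p m} ≤ r ↔ p r :=
  ⟨fun h => hp h (Nat.sInf_mem hex), fun h => Nat.sInf_le h⟩

theorem isSymTensor_iff {T : Fin n → Fin n → Fin n → K} :
    IsSymTensor T ↔ (∀ i j k, T j i k = T i j k) ∧ ∀ i j k, T i k j = T i j k := by
  refine ⟨fun h => ⟨fun i j k => ?_, fun i j k => ?_⟩, ?_⟩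
  · simpa [Equiv.swap_apply_def] using h (Equiv.swap 0 1) ![i, j, k]
  · simpa [Equiv.swap_apply_def] using h (Equiv.swap 1 2) ![i, j, k]
  rintro ⟨h₁₂, h₂₃⟩
  -- the permutations fixing `T` form a submonoid containing the adjacent transpositions
  let G : Submonoid (Equiv.Perm (Fin 3)) :=
    { carrier := {σ | ∀ v : Fin 3 → Fin n, T (v (σ 0)) (v (σ 1)) (v (σ 2)) = T (v 0) (v 1) (v 2)}
      one_mem' := fun v => rfl
      mul_mem' := fun hσ hτ v => (hτ (v ∘ _)).trans (hσ v) }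
  have hG : G = ⊤ := by
    rw [eq_top_iff, ← Equiv.Perm.mclosure_swap_castSucc_succ, Submonoid.closure_le]
    rintro _ ⟨i, rfl⟩ v
    fin_cases i
    · exact h₁₂ _ _ _
    · exact h₂₃ _ _ _
  intro σ
  exact (hG ▸ Submonoid.mem_top σ : σ ∈ G)

def tensorOuter (u v w : Fin n → K) : Fin n → Fin n → Fin n → K :=
  fun i j k => u i * v j * w k

theorem exists_sum_tensorOuter (T : Fin n → Fin n → Fin n → K) :
    ∃ (N : ℕ) (u v w : Fin N → Fin n → K), T = ∑ s, tensorOuter (u s) (v s) (w s) := by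
  refine ⟨n * n, fun s i => T i (finProdFinEquiv.symm s).1 (finProdFinEquiv.symm s).2,
    fun s => Pi.single (finProdFinEquiv.symm s).1 1,
    fun s => Pi.single (finProdFinEquiv.symm s).2 1, ?_⟩
  ext i j k
  rw [← finProdFinEquiv.sum_comp]
  simp [Finset.sum_apply, tensorOuter, Fintype.sum_prod_type, Pi.single_apply]

theorem IsSymTensor.exists_sum_smul_tensorOuter_self [CharZero K]
    {T : Fin n → Fin n → Fin n → K} (hT : IsSymTensor T) :
    ∃ (N : ℕ) (lam : Fin N → K) (u : Fin N → Fin n → K),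
      T = ∑ s, lam s • tensorOuter (u s) (u s) (u s) := by
  obtain ⟨h₁₂, h₂₃⟩ := isSymTensor_iff.1 hT
  set C := Submodule.span K (Set.range fun u : Fin n → K => tensorOuter u u u)
  let sym (x y z : Fin n → K) := tensorOuter x y z + tensorOuter x z y + tensorOuter y x z +
    tensorOuter y z x + tensorOuter z x y + tensorOuter z y x
  have hcube (u : Fin n → K) : tensorOuter u u u ∈ C := Submodule.subset_span ⟨u, rfl⟩
  -- polarization of the cubic form `u ↦ u ⊗ u ⊗ u`
  have hsym (x y z : Fin n → K) : sym x y z ∈ C := by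
    have hpolar : sym x y z =
        tensorOuter (x + y + z) (x + y + z) (x + y + z) - tensorOuter (x + y) (x + y) (x + y) -
        tensorOuter (x + z) (x + z) (x + z) - tensorOuter (y + z) (y + z) (y + z) +
        tensorOuter x x x + tensorOuter y y y + tensorOuter z z z := by
      ext i j k
      simp only [sym, tensorOuter, Pi.add_apply, Pi.sub_apply]
      ring
    rw [hpolar]
    apply_rules [C.add_mem, C.sub_mem]
  -- by symmetry each of the six terms of `sym` contributes `T i j k / 6`
  have hT' : T = ∑ a, ∑ b, ∑ c,
      (T a b c / 6) • sym (Pi.single a 1) (Pi.single b 1) (Pi.single c 1) := by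
    ext i j k
    simp [sym, Finset.sum_apply, tensorOuter, Pi.single_apply, Finset.sum_add_distrib, h₁₂, h₂₃]
    ring
  have hTC : T ∈ C := hT' ▸ C.sum_mem fun a _ => C.sum_mem fun b _ => C.sum_mem fun c _ =>
    C.smul_mem _ (hsym _ _ _)
  obtain ⟨N, lam, g, hg⟩ := Submodule.mem_span_set'.1 hTC
  choose u hu using fun s => (g s).2
  exact ⟨N, lam, u, by simp_rw [hu]; exact hg.symm⟩

theorem monotone_exists_sum_tensorOuter (T : Fin n → Fin n → Fin n → K) :
    Monotone fun r => ∃ u v w : Fin r → Fin n → K, T = ∑ s, tensorOuter (u s) (v s) (w s) := by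
  rintro r r' h ⟨u, v, w, rfl⟩
  obtain ⟨d, rfl⟩ := Nat.exists_eq_add_of_le h
  exact ⟨Fin.append u 0, Fin.append v 0, Fin.append w 0, by
    simp [Fin.sum_univ_add, funext_iff, tensorOuter]⟩

theorem monotone_exists_sum_smul_tensorOuter_self (T : Fin n → Fin n → Fin n → K) :
    Monotone fun r => ∃ (lam : Fin r → K) (u : Fin r → Fin n → K),
      T = ∑ s, lam s • tensorOuter (u s) (u s) (u s) := by
  rintro r r' h ⟨lam, u, rfl⟩
  obtain ⟨d, rfl⟩ := Nat.exists_eq_add_of_le h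
  exact ⟨Fin.append lam 0, Fin.append u 0, by simp [Fin.sum_univ_add]⟩

theorem tensorRank_le_iff {T : Fin n → Fin n → Fin n → K} {r : ℕ} :
    tensorRank T ≤ r ↔ ∃ u v w : Fin r → Fin n → K, T = ∑ s, tensorOuter (u s) (v s) (w s) := by
  have hdecomp (m : ℕ) :
      (∃ u v w : Fin m → Fin n → K, ∀ i j k, T i j k = ∑ s, u s i * v s j * w s k) ↔
        ∃ u v w : Fin m → Fin n → K, T = ∑ s, tensorOuter (u s) (v s) (w s) := by
    simp [funext_iff, Finset.sum_apply, tensorOuter]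
  simp only [tensorRank, hdecomp]
  exact Nat.sInf_setOf_le_iff (monotone_exists_sum_tensorOuter T) (exists_sum_tensorOuter T)

theorem isSymTensor_sum_smul_tensorOuter_self {N : ℕ} (lam : Fin N → K)
    (u : Fin N → Fin n → K) : IsSymTensor (∑ s, lam s • tensorOuter (u s) (u s) (u s)) := by
  refine isSymTensor_iff.2 ⟨fun i j k => ?_, fun i j k => ?_⟩ <;>
    simp only [Finset.sum_apply, Pi.smul_apply, smul_eq_mul, tensorOuter] <;>
    exact Finset.sum_congr rfl fun s _ => by ring

-- Polarization makes the `sInf` in `symTensorRank` attained; `sInf ∅ = 0` would be a junk value.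
theorem isSymTensor_and_symTensorRank_le_iff [CharZero K] {T : Fin n → Fin n → Fin n → K}
    {r : ℕ} : IsSymTensor T ∧ symTensorRank T ≤ r ↔
      ∃ (lam : Fin r → K) (u : Fin r → Fin n → K),
        T = ∑ s, lam s • tensorOuter (u s) (u s) (u s) := by
  have hdecomp (m : ℕ) : (∃ (lam : Fin m → K) (u : Fin m → Fin n → K),
      ∀ i j k, T i j k = ∑ s, lam s * (u s i * u s j * u s k)) ↔
      ∃ (lam : Fin m → K) (u : Fin m → Fin n → K),
        T = ∑ s, lam s • tensorOuter (u s) (u s) (u s) := by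
    simp [funext_iff, Finset.sum_apply, tensorOuter]
  constructor
  · rintro ⟨hT, hr⟩
    simp only [symTensorRank, hdecomp] at hr
    exact (Nat.sInf_setOf_le_iff (monotone_exists_sum_smul_tensorOuter_self T)
      hT.exists_sum_smul_tensorOuter_self).1 hr
  · rintro ⟨lam, u, rfl⟩
    exact ⟨isSymTensor_sum_smul_tensorOuter_self lam u, Nat.sInf_le ((hdecomp r).2 ⟨lam, u, rfl⟩)⟩

/-- `tensorMap A` is `A ⊗ A ⊗ A`. -/
def tensorMap (A : Matrix (Fin m) (Fin n) K) :
    (Fin n → Fin n → Fin n → K) →ₗ[K] (Fin m → Fin m → Fin m → K) where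
  toFun T a b c := ∑ i, ∑ j, ∑ k, A a i * A b j * A c k * T i j k
  map_add' T T' := by ext; simp [mul_add, Finset.sum_add_distrib]
  map_smul' x T := by
    ext a b c
    simp only [Pi.smul_apply, smul_eq_mul, RingHom.id_apply, Finset.mul_sum]
    exact Finset.sum_congr rfl fun i _ => Finset.sum_congr rfl fun j _ =>
      Finset.sum_congr rfl fun k _ => by ring

theorem tensorMap_apply (A : Matrix (Fin m) (Fin n) K) (T : Fin n → Fin n → Fin n → K)
    (a b c : Fin m) : tensorMap A T a b c = ∑ i, ∑ j, ∑ k, A a i * A b j * A c k * T i j k :=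
  rfl

theorem tensorMap_tensorOuter (A : Matrix (Fin m) (Fin n) K) (u v w : Fin n → K) :
    tensorMap A (tensorOuter u v w) = tensorOuter (A *ᵥ u) (A *ᵥ v) (A *ᵥ w) := by
  ext a b c
  simp only [tensorMap_apply, tensorOuter, mulVec, dotProduct]
  rw [Finset.sum_mul_sum]
  simp only [Finset.sum_mul]
  simp only [Finset.mul_sum]
  exact Finset.sum_congr rfl fun i _ => Finset.sum_congr rfl fun j _ =>
    Finset.sum_congr rfl fun k _ => by ring

theorem tensorMap_tensorMap {l : ℕ} (B : Matrix (Fin l) (Fin m) K) (A : Matrix (Fin m) (Fin n) K)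
    (T : Fin n → Fin n → Fin n → K) : tensorMap B (tensorMap A T) = tensorMap (B * A) T := by
  obtain ⟨N, u, v, w, rfl⟩ := exists_sum_tensorOuter T
  simp [map_sum, tensorMap_tensorOuter, mulVec_mulVec]

theorem IsSymTensor.tensorMap {T : Fin n → Fin n → Fin n → K} (hT : IsSymTensor T)
    (A : Matrix (Fin m) (Fin n) K) : IsSymTensor (tensorMap A T) := by
  obtain ⟨h₁₂, h₂₃⟩ := isSymTensor_iff.1 hT
  refine isSymTensor_iff.2 ⟨fun a b c => ?_, fun a b c => ?_⟩
  · rw [tensorMap_apply, tensorMap_apply, Finset.sum_comm]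
    exact Finset.sum_congr rfl fun i _ => Finset.sum_congr rfl fun j _ =>
      Finset.sum_congr rfl fun k _ => by rw [h₁₂]; ring
  · simp only [tensorMap_apply]
    exact Finset.sum_congr rfl fun i _ => by
      rw [Finset.sum_comm]
      exact Finset.sum_congr rfl fun j _ => Finset.sum_congr rfl fun k _ => by rw [h₂₃]; ring

theorem tensorRank_tensorMap_le (A : Matrix (Fin m) (Fin n) K) (T : Fin n → Fin n → Fin n → K) :
    tensorRank (tensorMap A T) ≤ tensorRank T := by
  obtain ⟨u, v, w, hT⟩ := tensorRank_le_iff.1 (le_refl (tensorRank T))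
  exact tensorRank_le_iff.2 ⟨fun s => A *ᵥ u s, fun s => A *ᵥ v s, fun s => A *ᵥ w s,
    by simp [hT, map_sum, tensorMap_tensorOuter]⟩

theorem symTensorRank_tensorMap_le [CharZero K] (A : Matrix (Fin m) (Fin n) K)
    {T : Fin n → Fin n → Fin n → K} (hT : IsSymTensor T) :
    symTensorRank (tensorMap A T) ≤ symTensorRank T := by
  obtain ⟨lam, u, hTu⟩ := isSymTensor_and_symTensorRank_le_iff.1 ⟨hT, le_refl (symTensorRank T)⟩
  exact (isSymTensor_and_symTensorRank_le_iff.2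
    ⟨lam, fun s => A *ᵥ u s, by simp [hTu, map_sum, tensorMap_tensorOuter]⟩).2

def tensorFlattening (T : Fin n → Fin n → Fin n → K) : Matrix (Fin n) (Fin n × Fin n) K :=
  Matrix.of fun i p => T i p.1 p.2

theorem rank_tensorFlattening_le_tensorRank (T : Fin n → Fin n → Fin n → K) :
    (tensorFlattening T).rank ≤ tensorRank T := by
  obtain ⟨u, v, w, hT⟩ := tensorRank_le_iff.1 (le_refl (tensorRank T))
  have hfac : tensorFlattening T =
      Matrix.of (fun i s => u s i) * Matrix.of fun s p => v s p.1 * w s p.2 := by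
    ext i p
    simp [hT, mul_apply, tensorFlattening, tensorOuter, Finset.sum_apply, mul_assoc]
  rw [hfac]
  exact (rank_mul_le_left _ _).trans (rank_le_width _)

theorem tensorMap_eq_self_of_mul_tensorFlattening {R : Matrix (Fin n) (Fin n) K}
    {T : Fin n → Fin n → Fin n → K} (hT : IsSymTensor T)
    (hR : R * tensorFlattening T = tensorFlattening T) :
    tensorMap R T = T := by
  obtain ⟨h₁₂, h₂₃⟩ := isSymTensor_iff.1 hT
  have h₁ (a j k : Fin n) : ∑ i, R a i * T i j k = T a j k := by
    simpa [mul_apply, tensorFlattening] using congrFun₂ hR a (j, k)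
  have h₂ (i b k : Fin n) : ∑ j, R b j * T i j k = T i b k := by
    simpa only [h₁₂ _ i k] using h₁ b i k
  have h₃ (i j c : Fin n) : ∑ k, R c k * T i j k = T i j c := by
    simpa only [h₂₃ i _ j] using h₂ i c j
  ext a b c
  calc tensorMap R T a b c = ∑ i, R a i * ∑ j, R b j * ∑ k, R c k * T i j k := by
        simp only [tensorMap_apply, Finset.mul_sum, mul_assoc]
    _ = T a b c := by simp only [h₃, h₂, h₁]

theorem Matrix.exists_mul_mul_eq_self_of_rank_le {m l : Type*} [Fintype m] [DecidableEq m]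
    [Fintype l] {M : Matrix m l K} {r : ℕ} (h : M.rank ≤ r) :
    ∃ (P : Matrix (Fin r) m K) (Q : Matrix m (Fin r) K), Q * P * M = M := by
  classical
  set A := LinearMap.range M.mulVecLin
  have hA : Module.rank K A ≤ r := by
    rw [← Module.finrank_eq_rank]
    exact_mod_cast h
  obtain ⟨ι, hι⟩ := Module.Free.exists_linearMap_injective_of_linearIndependent_of_lift_rank_le
    (M := A) (Pi.basisFun K (Fin r)).linearIndependent (by simpa using hA)
  obtain ⟨π, hπ⟩ := ι.exists_leftInverse_of_injective (LinearMap.ker_eq_bot.2 hι)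
  obtain ⟨ι', hι'⟩ := LinearMap.exists_extend ι
  refine ⟨LinearMap.toMatrix' ι', LinearMap.toMatrix' (A.subtype ∘ₗ π), ?_⟩
  refine Matrix.toLin'.injective (LinearMap.ext fun x => ?_)
  have hx : M *ᵥ x ∈ A := ⟨x, rfl⟩
  have hπι : π (ι' (M *ᵥ x)) = ⟨M *ᵥ x, hx⟩ :=
    (congrArg π (LinearMap.congr_fun hι' ⟨_, hx⟩)).trans (LinearMap.congr_fun hπ _)
  simp [Matrix.toLin'_mul, hπι]

theorem Matrix.isClosed_setOf_rank_le {𝕜 : Type*} [NontriviallyNormedField 𝕜] [CompleteSpace 𝕜]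
    {m l : Type*} [Fintype m] [Fintype l] [DecidableEq l] (r : ℕ) :
    IsClosed {M : Matrix m l 𝕜 | M.rank ≤ r} := by
  have hcont := (LinearMap.toContinuousLinearMap.toLinearMap ∘ₗ
    (Matrix.toLin' : Matrix m l 𝕜 ≃ₗ[𝕜] _).toLinearMap).continuous_of_finiteDimensional
  convert (isOpen_setOfPred_nat_le_rank (r + 1)).isClosed_compl.preimage hcont
  ext M
  simp only [Set.mem_ofPred_eq, Set.mem_preimage, Set.mem_compl_iff, LinearMap.coe_comp,
    LinearEquiv.coe_coe, Function.comp_apply, LinearMap.coe_toContinuousLinearMap, not_le]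
  rw [LinearMap.rank, toLin'_apply', ← Module.finrank_eq_rank]
  norm_cast
  exact Nat.lt_succ_iff.symm

theorem borderRank_le_iff {T : Fin n → Fin n → Fin n → ℂ} {r : ℕ} :
    borderRank T ≤ r ↔ T ∈ closure {S | tensorRank S ≤ r} := by
  obtain ⟨N, hN⟩ := exists_sum_tensorOuter T
  refine Nat.sInf_setOf_le_iff
    (fun a b hab hT => closure_mono (fun S (hS : tensorRank S ≤ a) => hS.trans hab) hT) ⟨N, ?_⟩
  exact subset_closure (tensorRank_le_iff.2 hN)

theorem symBorderRank_le_iff {T : Fin n → Fin n → Fin n → ℂ} (hT : IsSymTensor T) {r : ℕ} :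
    symBorderRank T ≤ r ↔ T ∈ closure {S | IsSymTensor S ∧ symTensorRank S ≤ r} := by
  obtain ⟨N, hN⟩ := hT.exists_sum_smul_tensorOuter_self
  refine Nat.sInf_setOf_le_iff
    (fun a b hab hT => closure_mono (fun S (hS : IsSymTensor S ∧ symTensorRank S ≤ a) =>
      hS.imp_right (·.trans hab)) hT) ⟨N, ?_⟩
  exact subset_closure (isSymTensor_and_symTensorRank_le_iff.2 hN)

theorem borderRank_tensorMap_le (A : Matrix (Fin m) (Fin n) ℂ)
    (T : Fin n → Fin n → Fin n → ℂ) : borderRank (tensorMap A T) ≤ borderRank T :=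
  borderRank_le_iff.2 <| map_mem_closure (tensorMap A).continuous_of_finiteDimensional
    (borderRank_le_iff.1 le_rfl) fun S hS => (tensorRank_tensorMap_le A S).trans hS

theorem symBorderRank_tensorMap_le (A : Matrix (Fin m) (Fin n) ℂ)
    {T : Fin n → Fin n → Fin n → ℂ} (hT : IsSymTensor T) :
    symBorderRank (tensorMap A T) ≤ symBorderRank T :=
  (symBorderRank_le_iff (hT.tensorMap A)).2 <|
    map_mem_closure (tensorMap A).continuous_of_finiteDimensional
      ((symBorderRank_le_iff hT).1 le_rfl) fun _ hS =>
        ⟨hS.1.tensorMap A, (symTensorRank_tensorMap_le A hS.1).trans hS.2⟩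

theorem rank_tensorFlattening_le_borderRank (T : Fin n → Fin n → Fin n → ℂ) :
    (tensorFlattening T).rank ≤ borderRank T := by
  have hclosed : IsClosed {S : Fin n → Fin n → Fin n → ℂ |
      (tensorFlattening S).rank ≤ borderRank T} :=
    (Matrix.isClosed_setOf_rank_le _).preimage (by unfold tensorFlattening; fun_prop)
  exact closure_minimal (fun S hS => (rank_tensorFlattening_le_tensorRank S).trans hS) hclosed
    (borderRank_le_iff.1 le_rfl)

theorem borderRank_inheritance_general (r n : ℕ)
    (H : ∀ S : Fin r → Fin r → Fin r → ℂ, IsSymTensor S → borderRank S ≤ r →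
      symBorderRank S ≤ r) :
    ∀ T : Fin n → Fin n → Fin n → ℂ, IsSymTensor T → borderRank T ≤ r →
      symBorderRank T ≤ r := by
  intro T hT hTr
  obtain ⟨P, Q, hQP⟩ := Matrix.exists_mul_mul_eq_self_of_rank_le
    ((rank_tensorFlattening_le_borderRank T).trans hTr)
  have hS : symBorderRank (tensorMap P T) ≤ r :=
    H _ (hT.tensorMap P) ((borderRank_tensorMap_le P T).trans hTr)
  calc symBorderRank T = symBorderRank (tensorMap Q (tensorMap P T)) := by
        rw [tensorMap_tensorMap, tensorMap_eq_self_of_mul_tensorFlattening hT hQP]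
    _ ≤ symBorderRank (tensorMap P T) := symBorderRank_tensorMap_le Q (hT.tensorMap P)
    _ ≤ r := hS

/-- Inheritance: if border rank and symmetric border rank agree for `r × r × r` tensors of
border rank `r`, then they agree for `n × n × n` tensors of border rank `r`, all `n ≥ r`. -/
theorem borderRank_inheritance (r n : ℕ) (hr : 0 < r) (hn : 0 < n) (hrn : r ≤ n)
    (H : ∀ S : Fin r → Fin r → Fin r → ℂ, IsSymTensor S → borderRank S ≤ r →
      symBorderRank S ≤ r) :
    ∀ T : Fin n → Fin n → Fin n → ℂ, IsSymTensor T → borderRank T ≤ r →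
      symBorderRank T ≤ r :=
  borderRank_inheritance_general r n H
end

section
/- Let m, n₂, n₃ be positive integers and let T : Fin (m+1) → Fin n₂ → Fin n₃ → ℝ be a tensor of real rank exactly r. Write M_i for the i-th slice of T, the n₂×n₃ real matrix with entries (M_i)_{jk} = T i j k, and suppose the last slice M_m is nonzero. Then there exist real constants λ₀, ..., λ_{m−1} such that the tensor T' : Fin m → Fin n₂ → Fin n₃ → ℝ defined by T' i j k = T i j k − λ_i · T m j k has real rank at most r − 1. Moreover, if the matrix M_m has matrix rank one, then T' has real rank exactly r − 1. -/
/-- The rank of an `n₁ × n₂ × n₃` tensor over `ℝ`. -/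
noncomputable def rank3 {n₁ n₂ n₃ : ℕ} (T : Fin n₁ → Fin n₂ → Fin n₃ → ℝ) : ℕ :=
  sInf {r : ℕ | ∃ (u : Fin r → Fin n₁ → ℝ) (v : Fin r → Fin n₂ → ℝ)
    (w : Fin r → Fin n₃ → ℝ), ∀ i j k, T i j k = ∑ s, u s i * v s j * w s k}

/-!
Write `T = ∑_{s < r} u_s ⊗ v_s ⊗ w_s` with `r = rank T`. As the last slice is nonzero, some
`u_{s₀}` has a nonzero last coordinate, and `λ_i = u_{s₀}(i) / u_{s₀}(m)` kills the `s₀`-th term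
in every slice `M_i - λ_i M_m`, leaving `r - 1` terms. Conversely, if `M_m = a ⊗ b`, adding the
term `(λ, 1) ⊗ a ⊗ b` to any decomposition of the reduced tensor recovers `T`, so the rank drops
by at most one.
-/

section Decomposition

variable {n₁ n₂ n₃ : ℕ}

def IsSumOfRankOne (T : Fin n₁ → Fin n₂ → Fin n₃ → ℝ) (r : ℕ) : Prop :=
  ∃ (u : Fin r → Fin n₁ → ℝ) (v : Fin r → Fin n₂ → ℝ) (w : Fin r → Fin n₃ → ℝ),
    ∀ i j k, T i j k = ∑ s, u s i * v s j * w s k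

lemma isSumOfRankOne_card {ι : Type*} [Fintype ι] {T : Fin n₁ → Fin n₂ → Fin n₃ → ℝ}
    (u : ι → Fin n₁ → ℝ) (v : ι → Fin n₂ → ℝ) (w : ι → Fin n₃ → ℝ)
    (hT : ∀ i j k, T i j k = ∑ s, u s i * v s j * w s k) :
    IsSumOfRankOne T (Fintype.card ι) := by
  let e := (Fintype.equivFin ι).symm
  refine ⟨u ∘ e, v ∘ e, w ∘ e, fun i j k => ?_⟩
  rw [hT, ← e.sum_comp]
  rfl

lemma isSumOfRankOne_mul (T : Fin n₁ → Fin n₂ → Fin n₃ → ℝ) : IsSumOfRankOne T (n₁ * n₂) := by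
  have hT (i j k) : T i j k = ∑ p : Fin n₁ × Fin n₂,
      (Pi.single p.1 1 : Fin n₁ → ℝ) i * (Pi.single p.2 1 : Fin n₂ → ℝ) j * T p.1 p.2 k := by
    simp [Fintype.sum_prod_type, Pi.single_apply]
  simpa using isSumOfRankOne_card _ _ _ hT

lemma isSumOfRankOne_rank3 (T : Fin n₁ → Fin n₂ → Fin n₃ → ℝ) : IsSumOfRankOne T (rank3 T) :=
  Nat.sInf_mem (s := {r | IsSumOfRankOne T r}) ⟨_, isSumOfRankOne_mul T⟩

lemma rank3_le_card {ι : Type*} [Fintype ι] {T : Fin n₁ → Fin n₂ → Fin n₃ → ℝ}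
    (u : ι → Fin n₁ → ℝ) (v : ι → Fin n₂ → ℝ) (w : ι → Fin n₃ → ℝ)
    (hT : ∀ i j k, T i j k = ∑ s, u s i * v s j * w s k) :
    rank3 T ≤ Fintype.card ι :=
  Nat.sInf_le (isSumOfRankOne_card u v w hT)

end Decomposition

theorem Matrix.exists_eq_vecMulVec_of_rank_le_one {m n K : Type*} [Fintype m] [Fintype n]
    [Field K] {A : Matrix m n K} (hA : A.rank ≤ 1) : ∃ a b, A = vecMulVec a b := by
  rw [Matrix.rank_eq_finrank_span_cols, finrank_le_one_iff] at hA
  obtain ⟨a, ha⟩ := hA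
  choose b hb using fun k => ha ⟨A.col k, Submodule.subset_span (Set.mem_range_self k)⟩
  refine ⟨a, b, Matrix.ext fun j k => ?_⟩
  simpa [vecMulVec_apply, mul_comm] using (congrFun (congrArg Subtype.val (hb k)) j).symm

section Substitution

variable {m n₂ n₃ : ℕ}

def subLastSlice (T : Fin (m + 1) → Fin n₂ → Fin n₃ → ℝ) (lam : Fin m → ℝ) :
    Fin m → Fin n₂ → Fin n₃ → ℝ :=
  fun i j k => T i.castSucc j k - lam i * T (Fin.last m) j k

lemma rank3_le_rank3_subLastSlice_add_one (T : Fin (m + 1) → Fin n₂ → Fin n₃ → ℝ)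
    (lam : Fin m → ℝ) (a : Fin n₂ → ℝ) (b : Fin n₃ → ℝ)
    (hab : ∀ j k, T (Fin.last m) j k = a j * b k) :
    rank3 T ≤ rank3 (subLastSlice T lam) + 1 := by
  obtain ⟨u, v, w, hT'⟩ := isSumOfRankOne_rank3 (subLastSlice T lam)
  let u' (s : Option (Fin (rank3 (subLastSlice T lam)))) : Fin (m + 1) → ℝ :=
    s.elim (Fin.snoc lam 1) fun t => Fin.snoc (u t) 0
  have hT (i j k) : T i j k = ∑ s, u' s i * s.elim a v j * s.elim b w k := by
    rw [Fintype.sum_option]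
    induction i using Fin.lastCases with
    | last => simp [u', hab]
    | cast i =>
      simp only [u', Option.elim, Fin.snoc_castSucc, ← hT' i j k, subLastSlice, hab]
      ring
  simpa using rank3_le_card _ _ _ hT

variable {ι : Type*} [Fintype ι] {T : Fin (m + 1) → Fin n₂ → Fin n₃ → ℝ}
  {u : ι → Fin (m + 1) → ℝ} {v : ι → Fin n₂ → ℝ} {w : ι → Fin n₃ → ℝ}

lemma exists_coeff_last_ne_zero (hT : ∀ i j k, T i j k = ∑ s, u s i * v s j * w s k)
    (hlast : (fun j k => T (Fin.last m) j k) ≠ 0) : ∃ s, u s (Fin.last m) ≠ 0 := by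
  by_contra! h
  exact hlast (funext₂ fun j k => by simp [hT, h])

lemma subLastSlice_eq_sum (hT : ∀ i j k, T i j k = ∑ s, u s i * v s j * w s k)
    (lam : Fin m → ℝ) (i j k) :
    subLastSlice T lam i j k =
      ∑ s, (u s i.castSucc - lam i * u s (Fin.last m)) * v s j * w s k := by
  rw [subLastSlice, hT, hT, Finset.mul_sum, ← Finset.sum_sub_distrib]
  exact Finset.sum_congr rfl fun s _ => by ring

lemma rank3_subLastSlice_le [DecidableEq ι] (hT : ∀ i j k, T i j k = ∑ s, u s i * v s j * w s k)
    {s₀ : ι} (hs₀ : u s₀ (Fin.last m) ≠ 0) :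
    rank3 (subLastSlice T fun i => u s₀ i.castSucc / u s₀ (Fin.last m)) ≤ Fintype.card ι - 1 := by
  set lam : Fin m → ℝ := fun i => u s₀ i.castSucc / u s₀ (Fin.last m)
  have hs₀_vanish (i : Fin m) : u s₀ i.castSucc - lam i * u s₀ (Fin.last m) = 0 := by
    simp [lam, hs₀]
  have hT' (i j k) : subLastSlice T lam i j k = ∑ s : {s // s ≠ s₀},
      (u s i.castSucc - lam i * u s (Fin.last m)) * v s j * w s k := by
    rw [subLastSlice_eq_sum hT, Fintype.sum_eq_add_sum_subtype_ne _ s₀, hs₀_vanish]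
    simp
  simpa using rank3_le_card _ _ _ hT'

end Substitution

theorem real_substitution_method_general (m n₂ n₃ r : ℕ) (T : Fin (m + 1) → Fin n₂ → Fin n₃ → ℝ)
    (hrank : rank3 T = r)
    (hlast : (fun j k => T (Fin.last m) j k) ≠ 0) :
    ∃ lam : Fin m → ℝ,
      rank3 (fun i j k => T i.castSucc j k - lam i * T (Fin.last m) j k) ≤ r - 1 ∧
      ((Matrix.of fun j k => T (Fin.last m) j k).rank = 1 →
        rank3 (fun i j k => T i.castSucc j k - lam i * T (Fin.last m) j k) = r - 1) := by
  obtain ⟨u, v, w, hT⟩ := isSumOfRankOne_rank3 T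
  obtain ⟨s₀, hs₀⟩ := exists_coeff_last_ne_zero hT hlast
  have hle := rank3_subLastSlice_le hT hs₀
  rw [Fintype.card_fin, hrank] at hle
  refine ⟨_, hle, fun hone => le_antisymm hle ?_⟩
  obtain ⟨a, b, hab⟩ := Matrix.exists_eq_vecMulVec_of_rank_le_one hone.le
  exact Nat.sub_le_of_le_add <|
    hrank ▸ rank3_le_rank3_subLastSlice_add_one T _ a b fun j k => congrFun₂ hab j k

/-- The substitution method over `ℝ`: subtracting suitable real multiples of a nonzero
last slice from the other slices lowers the real rank by at least one; exactly one if the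
last slice has rank one. -/
theorem real_substitution_method (m n₂ n₃ r : ℕ) (hm : 0 < m) (hn₂ : 0 < n₂)
    (hn₃ : 0 < n₃) (T : Fin (m + 1) → Fin n₂ → Fin n₃ → ℝ)
    (hrank : rank3 T = r)
    (hlast : (fun j k => T (Fin.last m) j k) ≠ 0) :
    ∃ lam : Fin m → ℝ,
      rank3 (fun i j k => T i.castSucc j k - lam i * T (Fin.last m) j k) ≤ r - 1 ∧
      ((Matrix.of fun j k => T (Fin.last m) j k).rank = 1 →
        rank3 (fun i j k => T i.castSucc j k - lam i * T (Fin.last m) j k) = r - 1) :=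
  real_substitution_method_general m n₂ n₃ r T hrank hlast
end
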